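/- arXiv:2311.10446 — 2 statements merged into one kernel-verified Lean document; each statement's English description precedes it below -/
import Mathlib

section
/- Let P_1 be a finite measure on ℝ^D supported in the closed unit ball that is not a Dirac measure (i.e. not concentrated at a single point), and let φ(x) = log ∫ exp(x·σ) dP_1(σ). Then there exists y ∈ ℝ^D such that y^T ∇²φ(x) y > 0 for every x ∈ ℝ^D. -/
/-!
Differentiating twice under the integral sign (legitimate because `P1` has bounded support) shows
that `y ↦ D²φ(x) y y` is the variance of `σ ↦ ⟪σ, y⟫` under the tilted probability measure
`e^{⟪x, σ⟫} dP1 / ∫ e^{⟪x, ·⟫} dP1`. Tilting by a positive density preserves null sets, so this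
variance vanishes only if `⟪·, y⟫` is `P1`-a.e. constant. If that happened for every `y`, in
particular for the vectors of an orthonormal basis, `P1` would be concentrated at one point.
-/

open MeasureTheory ProbabilityTheory Real
open scoped RealInnerProductSpace

lemma fderiv_fderiv_log_apply {E : Type*} [NormedAddCommGroup E] [NormedSpace ℝ E]
    {f : E → ℝ} {f' : E → E →L[ℝ] ℝ} {f'' : E →L[ℝ] E →L[ℝ] ℝ} {x : E}
    (hf : ∀ z, HasFDerivAt f (f' z) z) (hf0 : ∀ z, f z ≠ 0) (hf' : HasFDerivAt f' f'' x) (y : E) :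
    fderiv ℝ (fderiv ℝ fun z ↦ log (f z)) x y y = f'' y y / f x - (f' x y / f x) ^ 2 := by
  have hlog : fderiv ℝ (fun z ↦ log (f z)) = fun z ↦ (f z)⁻¹ • f' z :=
    funext fun z ↦ ((hf z).log (hf0 z)).fderiv
  have hinv : HasFDerivAt (fun z ↦ (f z)⁻¹) (-(f x ^ 2)⁻¹ • f' x) x :=
    (hasDerivAt_inv (hf0 x)).comp_hasFDerivAt x (hf x)
  have hquot : HasFDerivAt (fun z ↦ (f z)⁻¹ • f' z)
      ((f x)⁻¹ • f'' + (-(f x ^ 2)⁻¹ • f' x).smulRight (f' x)) x :=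
    hinv.smul hf'
  rw [hlog, hquot.fderiv]
  simp only [add_apply, ContinuousLinearMap.smulRight_apply, smul_apply, smul_eq_mul]
  field_simp
  ring

lemma ProbabilityTheory.variance_pos_of_forall_not_ae_eq {Ω : Type*} [MeasurableSpace Ω]
    {μ : Measure Ω} [IsFiniteMeasure μ] {X : Ω → ℝ} (hX : MemLp X 2 μ)
    (h : ∀ c, ¬ ∀ᵐ ω ∂μ, X ω = c) : 0 < Var[X; μ] :=
  (variance_nonneg X μ).lt_of_ne fun h0 ↦ h _ (ae_eq_integral_of_variance_eq_zero hX h0.symm)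

lemma exists_inner_not_ae_eq_const {E : Type*} [NormedAddCommGroup E] [InnerProductSpace ℝ E]
    [FiniteDimensional ℝ E] [MeasurableSpace E] [BorelSpace E] {μ : Measure E}
    (hμ : ¬ ∃ (c : ENNReal) (σ₀ : E), μ = c • Measure.dirac σ₀) :
    ∃ y : E, ∀ c : ℝ, ¬ ∀ᵐ σ ∂μ, ⟪σ, y⟫ = c := by
  by_contra! hconst
  choose c hc using hconst
  let b := stdOrthonormalBasis ℝ E
  have hae : ∀ᵐ σ ∂μ, σ ∈ ({∑ i, c (b i) • b i} : Finset E) := by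
    filter_upwards [ae_all_iff.2 fun i ↦ hc (b i)] with σ hσ
    rw [Finset.mem_singleton]
    conv_lhs => rw [← b.sum_repr' σ]
    simp_rw [real_inner_comm, hσ]
  exact hμ ⟨_, _, by simpa using Measure.ae_mem_finset_iff.1 hae⟩

section LogLaplaceTransform

variable {E F : Type*} [NormedAddCommGroup E] [InnerProductSpace ℝ E]
  [NormedAddCommGroup F] [NormedSpace ℝ F] {R C : ℝ}

lemma exp_inner_le_exp_mul {x σ : E} (hσ : ‖σ‖ ≤ R) : exp ⟪x, σ⟫ ≤ exp (‖x‖ * R) :=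
  exp_le_exp.2 <| (real_inner_le_norm x σ).trans <| mul_le_mul_of_nonneg_left hσ (norm_nonneg x)

variable [MeasurableSpace E] {μ : Measure E} {v : E → F}

lemma ae_norm_innerSL_smulRight_le (hμ : ∀ᵐ σ ∂μ, ‖σ‖ ≤ R) (hvC : ∀ᵐ σ ∂μ, ‖v σ‖ ≤ C) :
    ∀ᵐ σ ∂μ, ‖(innerSL ℝ σ).smulRight (v σ)‖ ≤ R * C := by
  filter_upwards [hμ, hvC] with σ hσ hvσ
  rw [ContinuousLinearMap.norm_smulRight_apply, innerSL_apply_norm]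
  exact mul_le_mul hσ hvσ (norm_nonneg _) ((norm_nonneg σ).trans hσ)

variable [OpensMeasurableSpace E]

lemma memLp_inner_tilted (hμ : ∀ᵐ σ ∂μ, ‖σ‖ ≤ R) (x y : E) :
    MemLp (fun σ ↦ ⟪σ, y⟫) 2 (μ.tilted fun σ ↦ ⟪x, σ⟫) := by
  refine .of_bound (continuous_id.inner continuous_const).aestronglyMeasurable (R * ‖y‖) ?_
  filter_upwards [(tilted_absolutelyContinuous μ _).ae_le hμ] with σ hσ
  exact (norm_inner_le_norm σ y).trans (mul_le_mul_of_nonneg_right hσ (norm_nonneg y))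

lemma integrable_exp_inner_smul [IsFiniteMeasure μ] (hμ : ∀ᵐ σ ∂μ, ‖σ‖ ≤ R)
    (hv : AEStronglyMeasurable v μ) (hvC : ∀ᵐ σ ∂μ, ‖v σ‖ ≤ C) (x : E) :
    Integrable (fun σ ↦ exp ⟪x, σ⟫ • v σ) μ := by
  refine .of_bound (C := exp (‖x‖ * R) * C) ?_ ?_
  · exact (continuous_exp.comp (continuous_const.inner continuous_id)).aestronglyMeasurable.smul hv
  · filter_upwards [hμ, hvC] with σ hσ hvσ
    rw [norm_smul, norm_of_nonneg (exp_pos _).le]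
    exact mul_le_mul (exp_inner_le_exp_mul hσ) hvσ (norm_nonneg _) (exp_pos _).le

lemma integrable_exp_inner [IsFiniteMeasure μ] (hμ : ∀ᵐ σ ∂μ, ‖σ‖ ≤ R) (x : E) :
    Integrable (fun σ ↦ exp ⟪x, σ⟫) μ := by
  simpa using integrable_exp_inner_smul hμ (aestronglyMeasurable_const (b := (1 : ℝ)))
    (C := 1) (by simp) x

lemma variance_tilted_inner_pos [IsFiniteMeasure μ] (hμ : ∀ᵐ σ ∂μ, ‖σ‖ ≤ R) {y : E}
    (hy : ∀ c, ¬ ∀ᵐ σ ∂μ, ⟪σ, y⟫ = c) (x : E) :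
    0 < Var[fun σ ↦ ⟪σ, y⟫; μ.tilted fun σ ↦ ⟪x, σ⟫] :=
  variance_pos_of_forall_not_ae_eq (memLp_inner_tilted hμ x y) fun c hc ↦
    hy c ((absolutelyContinuous_tilted (integrable_exp_inner hμ x)).ae_le hc)

variable [SecondCountableTopology E]

lemma aestronglyMeasurable_innerSL_smulRight (hv : AEStronglyMeasurable v μ) :
    AEStronglyMeasurable (fun σ ↦ (innerSL ℝ σ).smulRight (v σ)) μ :=
  (ContinuousLinearMap.smulRightL ℝ E F).continuous₂.comp_aestronglyMeasurable₂
    ((innerSL ℝ).continuous.comp_aestronglyMeasurable aestronglyMeasurable_id) hv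

variable [IsFiniteMeasure μ]

/- The derivative is again of the form `∫ exp ⟪x, σ⟫ • w σ` with `w` a.e. bounded, so the lemma
can be applied to it once more. -/
lemma hasFDerivAt_integral_exp_inner_smul [CompleteSpace F] (hμ : ∀ᵐ σ ∂μ, ‖σ‖ ≤ R)
    (hv : AEStronglyMeasurable v μ) (hvC : ∀ᵐ σ ∂μ, ‖v σ‖ ≤ C) (x : E) :
    HasFDerivAt (fun x ↦ ∫ σ, exp ⟪x, σ⟫ • v σ ∂μ)
      (∫ σ, exp ⟪x, σ⟫ • (innerSL ℝ σ).smulRight (v σ) ∂μ) x := by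
  have hv' := aestronglyMeasurable_innerSL_smulRight hv
  refine hasFDerivAt_integral_of_dominated_of_fderiv_le
    (F' := fun x σ ↦ exp ⟪x, σ⟫ • (innerSL ℝ σ).smulRight (v σ)) (Metric.ball_mem_nhds x one_pos)
    (.of_forall fun x ↦ (integrable_exp_inner_smul hμ hv hvC x).aestronglyMeasurable)
    (integrable_exp_inner_smul hμ hv hvC x)
    (integrable_exp_inner_smul hμ hv' (ae_norm_innerSL_smulRight_le hμ hvC) x).aestronglyMeasurable
    (bound := fun _ ↦ exp ((‖x‖ + 1) * R) * (R * C)) ?_ (integrable_const _) ?_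
  · filter_upwards [hμ, ae_norm_innerSL_smulRight_le hμ hvC] with σ hσ hvσ x' hx'
    have hR : 0 ≤ R := (norm_nonneg σ).trans hσ
    have hx'x : ‖x'‖ ≤ ‖x‖ + 1 := by
      linarith [norm_le_norm_add_norm_sub' x' x, (mem_ball_iff_norm.1 hx').le]
    rw [norm_smul, norm_of_nonneg (exp_pos _).le]
    refine mul_le_mul ((exp_inner_le_exp_mul hσ).trans ?_) hvσ (norm_nonneg _) (exp_pos _).le
    exact exp_le_exp.2 (mul_le_mul_of_nonneg_right hx'x hR)
  · refine .of_forall fun σ x' _ ↦ ?_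
    have hinner : HasFDerivAt (fun x ↦ ⟪x, σ⟫) (innerSL ℝ σ) x' := by
      convert (innerSL ℝ σ).hasFDerivAt using 1
      ext
      simp [real_inner_comm]
    convert hinner.exp.smul_const (v σ) using 1
    ext y
    simp [smul_smul, mul_comm]

lemma fderiv_fderiv_log_integral_exp_inner_apply [NeZero μ] (hμ : ∀ᵐ σ ∂μ, ‖σ‖ ≤ R) (x y : E) :
    fderiv ℝ (fderiv ℝ fun x ↦ log (∫ σ, exp ⟪x, σ⟫ ∂μ)) x y y =
      (∫ σ, exp ⟪x, σ⟫ * ⟪σ, y⟫ ^ 2 ∂μ) / (∫ σ, exp ⟪x, σ⟫ ∂μ) -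
        ((∫ σ, exp ⟪x, σ⟫ * ⟪σ, y⟫ ∂μ) / (∫ σ, exp ⟪x, σ⟫ ∂μ)) ^ 2 := by
  have h₀ : AEStronglyMeasurable (fun _ : E ↦ (1 : ℝ)) μ := aestronglyMeasurable_const
  have hC₀ : ∀ᵐ σ ∂μ, ‖(fun _ : E ↦ (1 : ℝ)) σ‖ ≤ 1 := by simp
  have hL : ∀ z, HasFDerivAt (fun x ↦ ∫ σ, exp ⟪x, σ⟫ ∂μ)
      (∫ σ, exp ⟪z, σ⟫ • (innerSL ℝ σ).smulRight (1 : ℝ) ∂μ) z := fun z ↦ by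
    simpa only [smul_eq_mul, mul_one] using hasFDerivAt_integral_exp_inner_smul hμ h₀ hC₀ z
  have hv₁ := aestronglyMeasurable_innerSL_smulRight h₀
  have hC₁ := ae_norm_innerSL_smulRight_le hμ hC₀
  have hint₂ := integrable_exp_inner_smul hμ (aestronglyMeasurable_innerSL_smulRight hv₁)
    (ae_norm_innerSL_smulRight_le hμ hC₁) x
  rw [fderiv_fderiv_log_apply hL (fun z ↦ (integral_exp_pos (integrable_exp_inner hμ z)).ne')
      (hasFDerivAt_integral_exp_inner_smul hμ hv₁ hC₁ x),
    ContinuousLinearMap.integral_apply hint₂,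
    ContinuousLinearMap.integral_apply (hint₂.apply_continuousLinearMap y),
    ContinuousLinearMap.integral_apply (integrable_exp_inner_smul hμ hv₁ hC₁ x)]
  simp [pow_two]

lemma fderiv_fderiv_log_integral_exp_inner_apply_eq_variance [NeZero μ]
    (hμ : ∀ᵐ σ ∂μ, ‖σ‖ ≤ R) (x y : E) :
    fderiv ℝ (fderiv ℝ fun x ↦ log (∫ σ, exp ⟪x, σ⟫ ∂μ)) x y y =
      Var[fun σ ↦ ⟪σ, y⟫; μ.tilted fun σ ↦ ⟪x, σ⟫] := by
  have := isProbabilityMeasure_tilted (integrable_exp_inner hμ x)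
  rw [variance_eq_sub (memLp_inner_tilted hμ x y), integral_tilted, integral_tilted,
    fderiv_fderiv_log_integral_exp_inner_apply hμ]
  simp only [Pi.pow_apply, smul_eq_mul, div_mul_eq_mul_div, integral_div]

end LogLaplaceTransform

/-- If `P1` is a finite measure supported in the unit ball which is not (a multiple of) a Dirac
measure, then there is a direction `y` along which the Hessian of the log-Laplace transform `φ`
is strictly positive at every point. -/
theorem stmt6 {D : ℕ} (P1 : Measure (EuclideanSpace ℝ (Fin D))) [IsFiniteMeasure P1]
    (hsupp : P1 (Metric.closedBall 0 1)ᶜ = 0)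
    (hnd : ¬ ∃ (c : ENNReal) (σ0 : EuclideanSpace ℝ (Fin D)), P1 = c • Measure.dirac σ0)
    (φ : EuclideanSpace ℝ (Fin D) → ℝ)
    (hφ : ∀ x, φ x = Real.log (∫ σ, Real.exp ((inner ℝ x σ : ℝ)) ∂P1)) :
    ∃ y : EuclideanSpace ℝ (Fin D), ∀ x, 0 < (fderiv ℝ (fderiv ℝ φ) x) y y := by
  have hball : ∀ᵐ σ ∂P1, ‖σ‖ ≤ 1 := by
    simpa [ae_iff, Set.compl_def, mem_closedBall_zero_iff] using hsupp
  have : NeZero P1 := ⟨fun h0 ↦ hnd ⟨0, 0, by simp [h0]⟩⟩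
  obtain ⟨y, hy⟩ := exists_inner_not_ae_eq_const hnd
  refine ⟨y, fun x ↦ ?_⟩
  rw [funext hφ, fderiv_fderiv_log_integral_exp_inner_apply_eq_variance hball]
  exact variance_tilted_inner_pos hball hy x
end

section
/- Let α, α' : [0,1] → [0,1] be right-continuous increasing functions with α(0)=α'(0)≥0 and α(1)=α'(1)=1 (cumulative distribution functions), and let α^{-1}, α'^{-1} be their left-continuous generalized inverses (quantile functions). Then ∫₀¹ |α^{-1}(s) − α'^{-1}(s)| ds = ∫₀¹ |α(s) − α'(s)| ds. -/
/-!
Both sides are the area of the region of the unit square lying between the graphs of `α` and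
`α'`. Slicing it vertically, the slice at `t` is the segment between `α t` and `α' t`; slicing it
horizontally, right-continuity gives the Galois connection `qinv α s ≤ t ↔ s ≤ α t`, so the slice
at `s` is the segment between `qinv α s` and `qinv α' s`. Fubini's theorem equates the two
integrals of the slice lengths.
-/

open Set

/-- The left-continuous generalized inverse (quantile function) of `α` on `[0,1]`. -/
noncomputable def qinv (α : ℝ → ℝ) (s : ℝ) : ℝ :=
  sInf {t : ℝ | t ∈ Icc (0:ℝ) 1 ∧ s ≤ α t}

open MeasureTheory
open scoped symmDiff

theorem Set.Iic_symmDiff_Iic {X : Type*} [LinearOrder X] (a b : X) :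
    Iic a ∆ Iic b = Ioc (min a b) (max a b) := by
  ext x
  simp only [mem_symmDiff, mem_Iic, mem_Ioc, min_lt_iff, le_max_iff, not_le]
  grind

theorem Set.Ici_symmDiff_Ici {X : Type*} [LinearOrder X] (a b : X) :
    Ici a ∆ Ici b = Ico (min a b) (max a b) := by
  ext x
  simp only [mem_symmDiff, mem_Ici, mem_Ico, min_le_iff, lt_max_iff, not_le]
  grind

theorem abs_indicator_one_sub_indicator_one {X : Type*} (s t : Set X) (x : X) :
    |s.indicator (1 : X → ℝ) x - t.indicator 1 x| = (s ∆ t).indicator 1 x := by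
  rw [← abs_indicator_symmDiff]
  by_cases hx : x ∈ s ∆ t <;> simp [hx]

theorem setIntegral_abs_indicator_one_sub_indicator_one {X : Type*} [MeasurableSpace X]
    {μ : Measure X} {s t u : Set X} (hs : MeasurableSet s)
    (ht : MeasurableSet t) (hst : s ∆ t ⊆ u) :
    ∫ x in u, |s.indicator (1 : X → ℝ) x - t.indicator 1 x| ∂μ = μ.real (s ∆ t) := by
  simp_rw [abs_indicator_one_sub_indicator_one]
  rw [integral_indicator_one (hs.symmDiff ht), measureReal_restrict_apply (hs.symmDiff ht),
    inter_eq_left.mpr hst]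

theorem setIntegral_Icc_abs_indicator_Iic_sub_indicator_Iic {a b c d : ℝ} (ha : a ∈ Icc c d)
    (hb : b ∈ Icc c d) :
    ∫ x in Icc c d, |(Iic a).indicator (1 : ℝ → ℝ) x - (Iic b).indicator 1 x| = |a - b| := by
  have hsub : Iic a ∆ Iic b ⊆ Icc c d := by
    rw [Iic_symmDiff_Iic]
    exact Ioc_subset_Icc_self.trans (Icc_subset_Icc (le_min ha.1 hb.1) (max_le ha.2 hb.2))
  rw [setIntegral_abs_indicator_one_sub_indicator_one measurableSet_Iic measurableSet_Iic hsub,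
    Iic_symmDiff_Iic, Real.volume_real_Ioc_of_le min_le_max, max_sub_min_eq_abs']

theorem setIntegral_Icc_abs_indicator_Ici_sub_indicator_Ici {a b c d : ℝ} (ha : a ∈ Icc c d)
    (hb : b ∈ Icc c d) :
    ∫ x in Icc c d, |(Ici a).indicator (1 : ℝ → ℝ) x - (Ici b).indicator 1 x| = |a - b| := by
  have hsub : Ici a ∆ Ici b ⊆ Icc c d := by
    rw [Ici_symmDiff_Ici]
    exact Ico_subset_Icc_self.trans (Icc_subset_Icc (le_min ha.1 hb.1) (max_le ha.2 hb.2))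
  rw [setIntegral_abs_indicator_one_sub_indicator_one measurableSet_Ici measurableSet_Ici hsub,
    Ici_symmDiff_Ici, Real.volume_real_Ico_of_le min_le_max, max_sub_min_eq_abs']

theorem integrable_abs_indicator_Iic_sub_indicator_Iic {Y : Type*} [MeasurableSpace Y]
    {μ : Measure ℝ} {ν : Measure Y} [IsFiniteMeasure μ] [IsFiniteMeasure ν] {β β' : Y → ℝ}
    (hβ : AEMeasurable β ν) (hβ' : AEMeasurable β' ν) :
    Integrable (fun p : ℝ × Y =>
      |(Iic (β p.2)).indicator (1 : ℝ → ℝ) p.1 - (Iic (β' p.2)).indicator 1 p.1|) (μ.prod ν) := by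
  have hG : Measurable fun q : ℝ × ℝ × ℝ =>
      |(Iic q.2.1).indicator (1 : ℝ → ℝ) q.1 - (Iic q.2.2).indicator 1 q.1| := by
    have hle : ∀ i : ℝ × ℝ × ℝ → ℝ, Measurable i →
        Measurable fun q : ℝ × ℝ × ℝ => (Iic (i q)).indicator (1 : ℝ → ℝ) q.1 := fun i hi =>
      measurable_const.indicator (measurableSet_le measurable_fst hi)
    exact ((hle _ (measurable_fst.comp measurable_snd)).sub
      (hle _ (measurable_snd.comp measurable_snd))).abs
  have hmeas : AEMeasurable (fun p : ℝ × Y => (p.1, β p.2, β' p.2)) (μ.prod ν) :=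
    measurable_fst.aemeasurable.prodMk (hβ.comp_snd.prodMk hβ'.comp_snd)
  exact Integrable.of_bound (hG.comp_aemeasurable hmeas).aestronglyMeasurable 1
    (ae_of_all _ fun p => by
      rw [Real.norm_eq_abs, abs_abs, abs_indicator_one_sub_indicator_one]
      exact indicator_apply_le' (fun _ => le_rfl) (fun _ => zero_le_one))

section Quantile

variable {α : ℝ → ℝ} {s t : ℝ}

theorem qinv_nonneg : 0 ≤ qinv α s :=
  Real.sInf_nonneg fun _ hu => hu.1.1

theorem qinv_le (ht : t ∈ Icc (0:ℝ) 1) (hst : s ≤ α t) : qinv α s ≤ t :=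
  csInf_le ⟨0, fun _ hu => hu.1.1⟩ ⟨ht, hst⟩

theorem qinv_mem_Icc (h1 : α 1 = 1) (hs : s ≤ 1) : qinv α s ∈ Icc (0:ℝ) 1 :=
  ⟨qinv_nonneg, qinv_le (right_mem_Icc.mpr zero_le_one) (by rwa [h1])⟩

theorem le_apply_qinv (hrc : ∀ t ∈ Ico (0:ℝ) 1, ContinuousWithinAt α (Ici t) t) (h1 : α 1 = 1)
    (hs : s ≤ 1) : s ≤ α (qinv α s) := by
  have hne : {t : ℝ | t ∈ Icc (0:ℝ) 1 ∧ s ≤ α t}.Nonempty :=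
    ⟨1, right_mem_Icc.mpr zero_le_one, by rwa [h1]⟩
  rcases (qinv_mem_Icc h1 hs).2.eq_or_lt with hq | hq
  · rwa [hq, h1]
  · exact isClosed_Ici.mem_of_frequently_of_tendsto
      ((isGLB_csInf hne ⟨0, fun _ hu => hu.1.1⟩).frequently_mem hne |>.mono fun _ hu => hu.2)
      (hrc _ ⟨qinv_nonneg, hq⟩)

theorem qinv_le_iff (hm : MonotoneOn α (Icc 0 1))
    (hrc : ∀ t ∈ Ico (0:ℝ) 1, ContinuousWithinAt α (Ici t) t) (h1 : α 1 = 1) (hs : s ≤ 1)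
    (ht : t ∈ Icc (0:ℝ) 1) : qinv α s ≤ t ↔ s ≤ α t :=
  ⟨fun h => (le_apply_qinv hrc h1 hs).trans (hm (qinv_mem_Icc h1 hs) ht h), qinv_le ht⟩

theorem indicator_Ici_qinv (hm : MonotoneOn α (Icc 0 1))
    (hrc : ∀ t ∈ Ico (0:ℝ) 1, ContinuousWithinAt α (Ici t) t) (h1 : α 1 = 1) (hs : s ≤ 1)
    (ht : t ∈ Icc (0:ℝ) 1) :
    (Ici (qinv α s)).indicator (1 : ℝ → ℝ) t = (Iic (α t)).indicator 1 s := by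
  simp only [indicator, mem_Ici, mem_Iic, qinv_le_iff hm hrc h1 hs ht, Pi.one_apply]

end Quantile

theorem stmt7_general (α α' : ℝ → ℝ)
    (hm : MonotoneOn α (Icc 0 1)) (hm' : MonotoneOn α' (Icc 0 1))
    (hval : ∀ t ∈ Icc (0:ℝ) 1, α t ∈ Icc (0:ℝ) 1)
    (hval' : ∀ t ∈ Icc (0:ℝ) 1, α' t ∈ Icc (0:ℝ) 1)
    (hrc : ∀ t ∈ Ico (0:ℝ) 1, ContinuousWithinAt α (Ici t) t)
    (hrc' : ∀ t ∈ Ico (0:ℝ) 1, ContinuousWithinAt α' (Ici t) t)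
    (h1 : α 1 = 1) (h1' : α' 1 = 1) :
    ∫ s in (0:ℝ)..1, |qinv α s - qinv α' s| = ∫ s in (0:ℝ)..1, |α s - α' s| := by
  simp only [intervalIntegral.integral_of_le zero_le_one, ← integral_Icc_eq_integral_Ioc]
  calc ∫ s in Icc 0 1, |qinv α s - qinv α' s|
      = ∫ s in Icc 0 1, ∫ t in Icc 0 1,
          |(Ici (qinv α s)).indicator (1 : ℝ → ℝ) t - (Ici (qinv α' s)).indicator 1 t| :=
        setIntegral_congr_fun measurableSet_Icc fun s hs =>
          (setIntegral_Icc_abs_indicator_Ici_sub_indicator_Ici (qinv_mem_Icc h1 hs.2)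
            (qinv_mem_Icc h1' hs.2)).symm
    _ = ∫ s in Icc 0 1, ∫ t in Icc 0 1,
          |(Iic (α t)).indicator (1 : ℝ → ℝ) s - (Iic (α' t)).indicator 1 s| :=
        setIntegral_congr_fun measurableSet_Icc fun s hs =>
          setIntegral_congr_fun measurableSet_Icc fun t ht => by
            rw [indicator_Ici_qinv hm hrc h1 hs.2 ht, indicator_Ici_qinv hm' hrc' h1' hs.2 ht]
    _ = ∫ t in Icc 0 1, ∫ s in Icc 0 1,
          |(Iic (α t)).indicator (1 : ℝ → ℝ) s - (Iic (α' t)).indicator 1 s| :=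
        integral_integral_swap (integrable_abs_indicator_Iic_sub_indicator_Iic
          (aemeasurable_restrict_of_monotoneOn measurableSet_Icc hm)
          (aemeasurable_restrict_of_monotoneOn measurableSet_Icc hm'))
    _ = ∫ t in Icc 0 1, |α t - α' t| :=
        setIntegral_congr_fun measurableSet_Icc fun t ht =>
          setIntegral_Icc_abs_indicator_Iic_sub_indicator_Iic (hval t ht) (hval' t ht)

/-- For two cumulative distribution functions `α, α'` on `[0,1]` with the same value at `0`
and value `1` at `1`, the `L¹` distance of their quantile functions equals their `L¹` distance. -/
theorem stmt7 (α α' : ℝ → ℝ)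
    (hm : MonotoneOn α (Icc 0 1)) (hm' : MonotoneOn α' (Icc 0 1))
    (hval : ∀ t ∈ Icc (0:ℝ) 1, α t ∈ Icc (0:ℝ) 1)
    (hval' : ∀ t ∈ Icc (0:ℝ) 1, α' t ∈ Icc (0:ℝ) 1)
    (hrc : ∀ t ∈ Ico (0:ℝ) 1, ContinuousWithinAt α (Ici t) t)
    (hrc' : ∀ t ∈ Ico (0:ℝ) 1, ContinuousWithinAt α' (Ici t) t)
    (h0 : α 0 = α' 0) (h00 : 0 ≤ α 0) (h1 : α 1 = 1) (h1' : α' 1 = 1) :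
    ∫ s in (0:ℝ)..1, |qinv α s - qinv α' s| = ∫ s in (0:ℝ)..1, |α s - α' s| :=
  stmt7_general α α' hm hm' hval hval' hrc hrc' h1 h1'
end
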